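/- arXiv:math/0703780 — 7 statements merged into one kernel-verified Lean document; each statement's English description precedes it below -/
import Mathlib

section
/- Let (R,d) be a differential algebra of weight λ. Then for all x, y ∈ R and n ∈ ℕ, the generalized Leibniz formula holds: d^n(xy) = Σ_{k=0}^{n} Σ_{j=0}^{n-k} (n choose k)(n-k choose j) λ^k d^{n-j}(x) d^{k+j}(y). -/
/-!
Let `μ : R ⊗ R → R` be the multiplication. The weight-`λ` Leibniz rule says `d ∘ μ = μ ∘ E` with
`E = d ⊗ 1 + 1 ⊗ d + λ (d ⊗ d)`, hence `dⁿ ∘ μ = μ ∘ Eⁿ`. Since `d ⊗ 1` and `1 ⊗ d` commute,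
expanding `Eⁿ = (λ (d ⊗ 1)(1 ⊗ d) + (1 ⊗ d + d ⊗ 1))ⁿ` by the binomial theorem twice gives the formula.
-/

open Finset TensorProduct

theorem Commute.add_add_smul_mul_pow {k S : Type*} [CommSemiring k] [Semiring S] [Algebra k S]
    {a b : S} (h : Commute a b) (c : k) (n : ℕ) :
    (a + b + c • (a * b)) ^ n =
      ∑ i ∈ range (n + 1), ∑ j ∈ range (n - i + 1),
        (n.choose i * (n - i).choose j) • (c ^ i • (a ^ (n - j) * b ^ (i + j))) := by
  have hcomm : Commute (c • (a * b)) (b + a) :=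
    ((h.mul_left (Commute.refl b)).add_right ((Commute.refl a).mul_left h.symm)).smul_left c
  rw [add_comm a b, add_comm, hcomm.add_pow]
  refine sum_congr rfl fun i hi => ?_
  rw [h.symm.add_pow, mul_sum, sum_mul]
  refine sum_congr rfl fun j hj => ?_
  have hij : i + j ≤ n := by
    rw [mem_range_succ_iff] at hi hj
    omega
  have ha : a ^ (n - j) = a ^ i * a ^ (n - i - j) := by
    rw [← pow_add]
    congr 1
    omega
  rw [ha, pow_add, smul_pow, h.mul_pow]
  simp only [← (h.pow_pow _ _).eq, ← nsmul_eq_mul', mul_smul_comm, smul_mul_assoc, smul_smul,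
    mul_assoc]
  rw [← mul_assoc (b ^ i), (h.pow_pow _ _).symm.eq, mul_assoc]

namespace LinearMap

section

variable {k M N : Type*} [CommSemiring k] [AddCommMonoid M] [Module k M] [AddCommMonoid N]
  [Module k N]

theorem commute_rTensor_lTensor (f : Module.End k M) (g : Module.End k N) :
    Commute (f.rTensor N) (g.lTensor M) :=
  (rTensor_comp_lTensor (f := f) (g := g)).trans (lTensor_comp_rTensor (f := f) (g := g)).symm

theorem rTensor_pow_mul_lTensor_pow_tmul (f : Module.End k M) (g : Module.End k N) (p q : ℕ)
    (x : M) (y : N) : (f.rTensor N ^ p * g.lTensor M ^ q) (x ⊗ₜ y) = f^[p] x ⊗ₜ g^[q] y := by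
  simp only [rTensor_pow, lTensor_pow, Module.End.mul_apply, lTensor_tmul, rTensor_tmul,
    Module.End.pow_apply]

end

theorem comp_mul'_eq_of_weighted_leibniz {k R : Type*} [CommSemiring k] [Semiring R]
    [Algebra k R] (c : k) (d : Module.End k R)
    (hd : ∀ x y : R, d (x * y) = d x * y + x * d y + c • (d x * d y)) :
    d ∘ₗ mul' k R = mul' k R ∘ₗ (d.rTensor R + d.lTensor R + c • (d.rTensor R * d.lTensor R)) :=
  TensorProduct.ext' fun x y => by simp [hd]

end LinearMap

/-- Generalized Leibniz formula of weight λ: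
`d^n(xy) = Σ_{k=0}^n Σ_{j=0}^{n-k} (n choose k)(n-k choose j) λ^k d^{n-j}(x) d^{k+j}(y)`. -/
theorem general_leibniz_weight_lambda
    (k R : Type*) [CommRing k] [Ring R] [Algebra k R]
    (lam : k) (d : R →ₗ[k] R)
    (hleib : ∀ x y : R, d (x * y) = d x * y + x * d y + lam • (d x * d y))
    (x y : R) (n : ℕ) :
    (⇑d)^[n] (x * y) =
      ∑ i ∈ Finset.range (n + 1), ∑ j ∈ Finset.range (n - i + 1),
        (n.choose i * (n - i).choose j) •
          (lam ^ i • ((⇑d)^[n - j] x * (⇑d)^[i + j] y)) := by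
  calc (⇑d)^[n] (x * y) = ((d ^ n) ∘ₗ LinearMap.mul' k R) (x ⊗ₜ y) := by
        rw [LinearMap.comp_apply, LinearMap.mul'_apply, Module.End.pow_apply]
    _ = LinearMap.mul' k R
          (((d.rTensor R + d.lTensor R + lam • (d.rTensor R * d.lTensor R)) ^ n) (x ⊗ₜ y)) := by
        rw [Module.End.commute_pow_left_of_commute
          (LinearMap.comp_mul'_eq_of_weighted_leibniz lam d hleib), LinearMap.comp_apply]
    _ = _ := by
        rw [(LinearMap.commute_rTensor_lTensor d d).add_add_smul_mul_pow]
        simp only [LinearMap.sum_apply, LinearMap.smul_apply, map_sum, map_nsmul, map_smul,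
          LinearMap.rTensor_pow_mul_lTensor_pow_tmul, LinearMap.mul'_apply]
end

section
/- For a commutative k-algebra A, the λ-Hurwitz product on A^ℕ, defined by (fg)(n) = Σ_{k=0}^{n} Σ_{j=0}^{n-k} (n choose k)(n-k choose j) λ^k f(n-j) g(k+j), is commutative and associative, with multiplicative identity 1 given by 1(0) = 1_A and 1(n) = 0 for n > 0. -/
/-!
With `shift f n = f (n + 1)`, the coefficients `n.choose i * (n - i).choose j` are trinomial
coefficients and satisfy a three-term Pascal rule, which makes `shift` a `λ`-derivation:
`shift (f g) = (shift f) g + f (shift g) + λ (shift f) (shift g)`. A sequence is determined by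
its value at `0` and its shift, the product is bilinear and `(f g) 0 = f 0 * g 0`, so
associativity follows by induction on the index, simultaneously for all triples. Commutativity
is the reflection `j ↦ n - i - j`, and for the unit only the term `i = j = 0` survives.
-/

/-- The λ-Hurwitz product on `A^ℕ`. -/
def hurwitzMul {k A : Type*} [CommRing k] [CommRing A] [Algebra k A]
    (lam : k) (f g : ℕ → A) : ℕ → A :=
  fun n => ∑ i ∈ Finset.range (n + 1), ∑ j ∈ Finset.range (n - i + 1),
    (n.choose i * (n - i).choose j) • (lam ^ i • (f (n - j) * g (i + j)))

/-- The identity of the λ-Hurwitz product. -/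
def hurwitzOne {A : Type*} [One A] [Zero A] : ℕ → A :=
  fun n => if n = 0 then 1 else 0

open Finset

theorem Nat.succ_choose_mul_choose (n i j : ℕ) :
    (n + 1).choose i * (n + 1 - i).choose j =
      n.choose i * (n - i).choose j
      + (if j = 0 then 0 else n.choose i * (n - i).choose (j - 1))
      + (if i = 0 then 0 else n.choose (i - 1) * (n - (i - 1)).choose j) := by
  match i, j with
  | 0, 0 => simp
  | 0, j + 1 => simp [Nat.choose_succ_succ n j, add_comm]
  | i + 1, j =>
    rw [Nat.choose_succ_succ n i, Nat.add_sub_add_right]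
    simp only [Nat.succ_ne_zero, if_false, Nat.add_sub_cancel]
    rcases Nat.lt_or_ge n (i + 1) with hn | hn
    · rw [Nat.choose_eq_zero_of_lt hn]
      rcases j with _ | j <;> simp
    · rw [show n - i = n - (i + 1) + 1 by omega]
      rcases j with _ | j
      · simp [add_comm]
      · rw [Nat.choose_succ_succ (n - (i + 1)) j]
        simp only [Nat.succ_ne_zero, if_false, Nat.add_sub_cancel]
        ring

namespace Hurwitz

def shift {A : Type*} (f : ℕ → A) : ℕ → A := fun n => f (n + 1)

variable {k A : Type*} [CommRing k] [CommRing A] [Algebra k A] (lam : k)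

theorem hurwitzMul_apply_zero (f g : ℕ → A) : hurwitzMul lam f g 0 = f 0 * g 0 := by
  simp [hurwitzMul]

theorem hurwitzMul_comm (f g : ℕ → A) : hurwitzMul lam f g = hurwitzMul lam g f := by
  funext n
  refine sum_congr rfl fun i hi => ?_
  rw [← sum_range_reflect]
  refine sum_congr rfl fun j hj => ?_
  simp only [mem_range] at hi hj
  rw [Nat.add_sub_cancel, Nat.choose_symm (by omega), mul_comm (f _)]
  congr 5 <;> omega

theorem hurwitzMul_one (f : ℕ → A) : hurwitzMul lam f hurwitzOne = f := by
  funext n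
  rw [hurwitzMul, sum_eq_single 0, sum_eq_single 0]
  · simp [hurwitzOne]
  · intro j _ hj
    simp [hurwitzOne, hj]
  · simp
  · intro i _ hi
    refine sum_eq_zero fun j _ => ?_
    simp [hurwitzOne, hi]
  · simp

theorem hurwitzMul_add_left (f g h : ℕ → A) :
    hurwitzMul lam (f + g) h = hurwitzMul lam f h + hurwitzMul lam g h := by
  funext n
  simp only [hurwitzMul, Pi.add_apply, add_mul, smul_add, sum_add_distrib]

theorem hurwitzMul_smul_left (c : k) (f g : ℕ → A) :
    hurwitzMul lam (c • f) g = c • hurwitzMul lam f g := by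
  funext n
  simp only [hurwitzMul, Pi.smul_apply, smul_sum, smul_mul_assoc, smul_comm c]

theorem hurwitzMul_add_right (f g h : ℕ → A) :
    hurwitzMul lam f (g + h) = hurwitzMul lam f g + hurwitzMul lam f h := by
  simp only [hurwitzMul_comm lam f, hurwitzMul_add_left]

theorem hurwitzMul_smul_right (c : k) (f g : ℕ → A) :
    hurwitzMul lam f (c • g) = c • hurwitzMul lam f g := by
  simp only [hurwitzMul_comm lam f, hurwitzMul_smul_left]

theorem hurwitzMul_apply_eq_sum_range (f g : ℕ → A) {n N : ℕ} (hN : n < N) :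
    hurwitzMul lam f g n = ∑ i ∈ range N, ∑ j ∈ range N,
      (n.choose i * (n - i).choose j) • (lam ^ i • (f (n - j) * g (i + j))) := by
  rw [hurwitzMul, sum_subset (range_subset_range.2 hN)]
  · refine sum_congr rfl fun i hi => sum_subset (range_subset_range.2 (by omega)) ?_
    intro j _ hj
    simp only [mem_range, not_lt] at hj
    simp [Nat.choose_eq_zero_of_lt (show n - i < j by omega)]
  · intro i _ hi
    simp only [mem_range, not_lt] at hi
    simp [Nat.choose_eq_zero_of_lt (show n < i by omega)]

theorem hurwitzMul_shift_left_apply (f g : ℕ → A) (n : ℕ) :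
    hurwitzMul lam (shift f) g n = ∑ i ∈ range (n + 2), ∑ j ∈ range (n + 2),
      (n.choose i * (n - i).choose j) • (lam ^ i • (f (n + 1 - j) * g (i + j))) := by
  rw [hurwitzMul_apply_eq_sum_range lam _ g (by omega : n < n + 2)]
  refine sum_congr rfl fun i hi => sum_congr rfl fun j hj => ?_
  simp only [mem_range] at hi hj
  by_cases hjn : j ≤ n
  · rw [shift, show n + 1 - j = n - j + 1 by omega]
  · simp [Nat.choose_eq_zero_of_lt (show n - i < j by omega)]

theorem hurwitzMul_shift_right_apply (f g : ℕ → A) (n : ℕ) :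
    hurwitzMul lam f (shift g) n = ∑ i ∈ range (n + 2), ∑ j ∈ range (n + 2),
      (if j = 0 then 0 else n.choose i * (n - i).choose (j - 1))
        • (lam ^ i • (f (n + 1 - j) * g (i + j))) := by
  rw [hurwitzMul_apply_eq_sum_range lam f _ (by omega : n < n + 2)]
  refine sum_congr rfl fun i hi => ?_
  conv_rhs => rw [sum_range_succ']
  conv_lhs => rw [sum_range_succ, Nat.choose_eq_zero_of_lt (show n - i < n + 1 by omega)]
  simp only [Nat.mul_zero, zero_smul, add_zero, Nat.succ_ne_zero, if_false,
    Nat.add_sub_cancel, reduceIte, Nat.add_sub_add_right, shift, Nat.add_assoc]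

theorem hurwitzMul_shift_shift_apply (f g : ℕ → A) (n : ℕ) :
    lam • hurwitzMul lam (shift f) (shift g) n = ∑ i ∈ range (n + 2), ∑ j ∈ range (n + 2),
      (if i = 0 then 0 else n.choose (i - 1) * (n - (i - 1)).choose j)
        • (lam ^ i • (f (n + 1 - j) * g (i + j))) := by
  rw [hurwitzMul_apply_eq_sum_range lam _ _ (by omega : n < n + 2), smul_sum]
  conv_rhs => rw [sum_range_succ']
  conv_lhs => rw [sum_range_succ, Nat.choose_eq_zero_of_lt (Nat.lt_succ_self n)]
  simp only [Nat.zero_mul, zero_smul, sum_const_zero, smul_zero, add_zero, Nat.succ_ne_zero,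
    if_false, Nat.add_sub_cancel, reduceIte]
  refine sum_congr rfl fun i hi => ?_
  rw [smul_sum]
  refine sum_congr rfl fun j hj => ?_
  simp only [mem_range] at hi hj
  by_cases hjn : j ≤ n
  · rw [shift, shift, show n + 1 - j = n - j + 1 by omega, show i + 1 + j = i + j + 1 by omega,
      pow_succ', mul_smul lam, smul_comm _ lam]
  · simp [Nat.choose_eq_zero_of_lt (show n - i < j by omega)]

theorem shift_hurwitzMul (f g : ℕ → A) :
    shift (hurwitzMul lam f g) = hurwitzMul lam (shift f) g + hurwitzMul lam f (shift g)
      + lam • hurwitzMul lam (shift f) (shift g) := by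
  funext n
  rw [Pi.add_apply, Pi.add_apply, Pi.smul_apply, hurwitzMul_shift_left_apply,
    hurwitzMul_shift_right_apply, hurwitzMul_shift_shift_apply, shift,
    hurwitzMul_apply_eq_sum_range lam f g (Nat.lt_succ_self (n + 1)), ← sum_add_distrib,
    ← sum_add_distrib]
  refine sum_congr rfl fun i _ => ?_
  rw [← sum_add_distrib, ← sum_add_distrib]
  refine sum_congr rfl fun j _ => ?_
  rw [← add_smul, ← add_smul, ← Nat.succ_choose_mul_choose]

theorem hurwitzMul_assoc (f g h : ℕ → A) :
    hurwitzMul lam (hurwitzMul lam f g) h = hurwitzMul lam f (hurwitzMul lam g h) := by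
  funext n
  induction n generalizing f g h with
  | zero => simp only [hurwitzMul_apply_zero, mul_assoc]
  | succ n ih =>
    change shift (hurwitzMul lam _ h) n = shift (hurwitzMul lam f _) n
    simp only [shift_hurwitzMul, hurwitzMul_add_left, hurwitzMul_add_right,
      hurwitzMul_smul_left, hurwitzMul_smul_right, Pi.add_apply, Pi.smul_apply, ih]
    module

end Hurwitz

open Hurwitz in
/-- The λ-Hurwitz product is commutative, associative and has `hurwitzOne` as
a two-sided multiplicative identity. -/
theorem hurwitz_product_comm_assoc_unital
    (k A : Type*) [CommRing k] [CommRing A] [Algebra k A] (lam : k) :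
    (∀ f g : ℕ → A, hurwitzMul lam f g = hurwitzMul lam g f) ∧
    (∀ f g h : ℕ → A,
      hurwitzMul lam (hurwitzMul lam f g) h = hurwitzMul lam f (hurwitzMul lam g h)) ∧
    (∀ f : ℕ → A, hurwitzMul lam f hurwitzOne = f) ∧
    (∀ f : ℕ → A, hurwitzMul lam hurwitzOne f = f) :=
  ⟨hurwitzMul_comm lam, hurwitzMul_assoc lam, hurwitzMul_one lam,
    fun f => (hurwitzMul_comm lam _ f).trans (hurwitzMul_one lam f)⟩
end

section
/- Let DA denote A^ℕ with the λ-Hurwitz product. The shift operator ∂_A defined by (∂_A f)(n) = f(n+1) is a λ-derivation on DA: ∂_A(fg) = ∂_A(f)g + f ∂_A(g) + λ ∂_A(f)∂_A(g), and ∂_A(1) = 0. -/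
/-- The shift operator on λ-Hurwitz series. -/
def hurwitzShift {A : Type*} (f : ℕ → A) : ℕ → A := fun n => f (n + 1)

/-!
Let `S` be the shift and `f ⋆ g` the binomial convolution `binomialConv` (the `λ = 0` product).
The λ-Hurwitz product is `∑ᵢ C(n,i) λⁱ (Sⁱf ⋆ Sⁱg)(n - i)`, and Pascal's rule splits a binomial
sum at `n + 1` into two sums at `n`. For `⋆` this is the Leibniz rule `S(f ⋆ g) = Sf ⋆ g + f ⋆ Sg`.
For the outer sum, one half raises the argument of `⋆` and yields the two Leibniz terms; the other
moves `i` to `i + 1` and yields the term `λ · Sf Sg`.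
-/

open Finset

theorem sum_choose_succ_nsmul' {M : Type*} [AddCommMonoid M] (F : ℕ → ℕ → M) (n : ℕ) :
    ∑ i ∈ range (n + 2), (n + 1).choose i • F i (n + 1 - i) =
      ∑ i ∈ range (n + 1), n.choose i • F i (n - i + 1) +
        ∑ i ∈ range (n + 1), n.choose i • F (i + 1) (n - i) := by
  rw [sum_choose_succ_nsmul]
  congr 1
  refine sum_congr rfl fun i hi => ?_
  rw [Nat.sub_add_comm (mem_range_succ_iff.mp hi)]

def binomialConv {A : Type*} [Mul A] [AddCommMonoid A] (f g : ℕ → A) (m : ℕ) : A :=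
  ∑ j ∈ range (m + 1), m.choose j • (f (m - j) * g j)

theorem binomialConv_succ {A : Type*} [Mul A] [AddCommMonoid A] (f g : ℕ → A) (m : ℕ) :
    binomialConv f g (m + 1) =
      binomialConv (hurwitzShift f) g m + binomialConv f (hurwitzShift g) m :=
  sum_choose_succ_nsmul' (fun j l => f l * g j) m

theorem iterate_hurwitzShift_apply {A : Type*} (f : ℕ → A) (i m : ℕ) :
    hurwitzShift^[i] f m = f (m + i) := by
  induction i generalizing f with
  | zero => rfl
  | succ i ih => exact ih (hurwitzShift f)

section HurwitzMul

variable {k A : Type*} [CommRing k] [CommRing A] [Algebra k A]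

theorem hurwitzMul_eq_sum_binomialConv (lam : k) (f g : ℕ → A) (n : ℕ) :
    hurwitzMul lam f g n = ∑ i ∈ range (n + 1),
      n.choose i • lam ^ i • binomialConv (hurwitzShift^[i] f) (hurwitzShift^[i] g) (n - i) := by
  refine sum_congr rfl fun i hi => ?_
  have hi : i ≤ n := mem_range_succ_iff.mp hi
  simp only [binomialConv, smul_sum, iterate_hurwitzShift_apply]
  refine sum_congr rfl fun j hj => ?_
  have hj : j ≤ n - i := mem_range_succ_iff.mp hj
  rw [show n - i - j + i = n - j by omega, add_comm j i, mul_smul, smul_comm ((n - i).choose j)]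

theorem hurwitzMul_succ (lam : k) (f g : ℕ → A) (n : ℕ) :
    hurwitzMul lam f g (n + 1) =
      hurwitzMul lam (hurwitzShift f) g n + hurwitzMul lam f (hurwitzShift g) n +
        lam • hurwitzMul lam (hurwitzShift f) (hurwitzShift g) n := by
  simp only [hurwitzMul_eq_sum_binomialConv, smul_sum, ← sum_add_distrib]
  refine (sum_choose_succ_nsmul' (fun i m =>
    lam ^ i • binomialConv (hurwitzShift^[i] f) (hurwitzShift^[i] g) m) n).trans ?_
  rw [← sum_add_distrib]
  refine sum_congr rfl fun i _ => ?_
  simp only [binomialConv_succ, Function.Commute.self_iterate hurwitzShift i f,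
    Function.Commute.self_iterate hurwitzShift i g, pow_succ',
    mul_smul, smul_add, smul_comm lam, Function.iterate_succ_apply]

end HurwitzMul

/-- The shift operator is a λ-derivation on the algebra of λ-Hurwitz series:
it satisfies the λ-Leibniz rule and kills the identity. -/
theorem hurwitz_shift_is_lambda_derivation
    (k A : Type*) [CommRing k] [CommRing A] [Algebra k A] (lam : k) :
    (∀ f g : ℕ → A,
      hurwitzShift (hurwitzMul lam f g) =
        hurwitzMul lam (hurwitzShift f) g + hurwitzMul lam f (hurwitzShift g) +
          lam • hurwitzMul lam (hurwitzShift f) (hurwitzShift g)) ∧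
    hurwitzShift (hurwitzOne : ℕ → A) = 0 := by
  exact ⟨fun f g => funext (hurwitzMul_succ lam f g),
    funext fun n => (if_neg n.succ_ne_zero : hurwitzOne (n + 1) = (0 : A))⟩
end

section
/- Let DA be the algebra of λ-Hurwitz series over A, with λ-derivation ∂_A(f)(n) = f(n+1). Define π_A: DA → DA by (π_A f)(n) = f(n-1) for n ≥ 1 and (π_A f)(0) = 0. Then π_A is a Rota-Baxter operator of weight λ on DA and ∂_A ∘ π_A = id, i.e., (DA, ∂_A, π_A) is a differential Rota-Baxter algebra of weight λ. -/
/-- The right-shift operator on λ-Hurwitz series. -/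
def hurwitzInt {A : Type*} [Zero A] (f : ℕ → A) : ℕ → A :=
  fun n => match n with
  | 0 => 0
  | m + 1 => f m

/-!
Writing `l = n - i - j`, the `n`-th coefficient of the λ-Hurwitz product `f g` is the trinomial
sum `∑_{i+j+l=n} n!/(i! j! l!) λ^i f(i+l) g(i+j)`. Pascal's rule for trinomial coefficients
splits the `(m+1)`-st coefficient of `π f · π g` into three trinomial sums of order `m`,
according to which of `l`, `j`, `i` is lowered by one: these are the `m`-th coefficients of
`f · π g`, `π f · g` and `λ f g`.
-/

open Finset

@[simp]
theorem hurwitzInt_zero {A : Type*} [Zero A] (f : ℕ → A) : hurwitzInt f 0 = 0 := rfl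

@[simp]
theorem hurwitzInt_succ {A : Type*} [Zero A] (f : ℕ → A) (n : ℕ) :
    hurwitzInt f (n + 1) = f n := rfl

theorem Finset.sum_antidiagonal_choose_succ_nsmul_fst {M : Type*} [AddCommMonoid M]
    (f : ℕ → ℕ → M) (n : ℕ) :
    ∑ ij ∈ antidiagonal (n + 1), (n + 1).choose ij.1 • f ij.1 ij.2 =
      ∑ ij ∈ antidiagonal n, n.choose ij.1 • f ij.1 (ij.2 + 1) +
        ∑ ij ∈ antidiagonal n, n.choose ij.1 • f (ij.1 + 1) ij.2 := by
  rw [sum_antidiagonal_choose_succ_nsmul]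
  congr 1
  refine sum_congr rfl fun ij hij => ?_
  rw [Nat.choose_symm_of_eq_add (mem_antidiagonal.mp hij).symm]

section TrinomialSum

variable {M : Type*} [AddCommMonoid M]

/-- `∑_{i+j+l=n} n!/(i! j! l!) • G i j l`. -/
def trinomialSum (n : ℕ) (G : ℕ → ℕ → ℕ → M) : M :=
  ∑ p ∈ antidiagonal n, n.choose p.1 • ∑ q ∈ antidiagonal p.2, p.2.choose q.1 • G p.1 q.1 q.2

@[simp]
theorem trinomialSum_zero (G : ℕ → ℕ → ℕ → M) : trinomialSum 0 G = G 0 0 0 := by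
  simp [trinomialSum]

theorem trinomialSum_succ (n : ℕ) (G : ℕ → ℕ → ℕ → M) :
    trinomialSum (n + 1) G =
      trinomialSum n (fun i j l => G i j (l + 1)) + trinomialSum n (fun i j l => G i (j + 1) l) +
        trinomialSum n (fun i j l => G (i + 1) j l) := by
  simp only [trinomialSum]
  rw [sum_antidiagonal_choose_succ_nsmul_fst
    (fun i r => ∑ q ∈ antidiagonal r, r.choose q.1 • G i q.1 q.2)]
  simp only [sum_antidiagonal_choose_succ_nsmul_fst, nsmul_add, sum_add_distrib]

theorem smul_trinomialSum {R : Type*} [Monoid R] [DistribMulAction R M] (c : R) (n : ℕ)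
    (G : ℕ → ℕ → ℕ → M) :
    c • trinomialSum n G = trinomialSum n (fun i j l => c • G i j l) := by
  simp only [trinomialSum, smul_sum, smul_comm c]

end TrinomialSum

theorem hurwitzMul_apply {k A : Type*} [CommRing k] [CommRing A] [Algebra k A]
    (lam : k) (f g : ℕ → A) (n : ℕ) :
    hurwitzMul lam f g n = trinomialSum n (fun i j l => lam ^ i • (f (i + l) * g (i + j))) := by
  simp only [hurwitzMul, trinomialSum, Nat.sum_antidiagonal_eq_sum_range_succ_mk, smul_sum]
  refine sum_congr rfl fun i hi => sum_congr rfl fun j hj => ?_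
  rw [mem_range] at hi hj
  rw [show i + (n - i - j) = n - j by omega, mul_smul]

theorem hurwitzMul_hurwitzInt_hurwitzInt {k A : Type*} [CommRing k] [CommRing A] [Algebra k A]
    (lam : k) (f g : ℕ → A) :
    hurwitzMul lam (hurwitzInt f) (hurwitzInt g) =
      hurwitzInt (hurwitzMul lam (hurwitzInt f) g) +
        hurwitzInt (hurwitzMul lam f (hurwitzInt g)) + lam • hurwitzInt (hurwitzMul lam f g) := by
  funext n
  cases n with
  | zero => simp [hurwitzMul_apply]
  | succ m =>
    simp only [Pi.add_apply, Pi.smul_apply, hurwitzInt_succ, hurwitzMul_apply, trinomialSum_succ,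
      smul_trinomialSum, pow_succ', mul_smul, ← add_assoc, add_right_comm _ 1]
    abel

theorem hurwitzShift_hurwitzInt {A : Type*} [Zero A] (f : ℕ → A) :
    hurwitzShift (hurwitzInt f) = f :=
  rfl

/-- `(DA, ∂_A, π_A)` is a differential Rota-Baxter algebra of weight λ:
`π_A` is a Rota-Baxter operator of weight λ and `∂_A ∘ π_A = id`. -/
theorem hurwitz_is_differential_rota_baxter
    (k A : Type*) [CommRing k] [CommRing A] [Algebra k A] (lam : k) :
    (∀ f g : ℕ → A,
      hurwitzMul lam (hurwitzInt f) (hurwitzInt g) =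
        hurwitzInt (hurwitzMul lam (hurwitzInt f) g) +
          hurwitzInt (hurwitzMul lam f (hurwitzInt g)) +
          lam • hurwitzInt (hurwitzMul lam f g)) ∧
    (∀ f : ℕ → A, hurwitzShift (hurwitzInt f) = f) :=
  ⟨hurwitzMul_hurwitzInt_hurwitzInt lam, hurwitzShift_hurwitzInt⟩
end

section
/- Let (A, d_0) be a commutative differential k-algebra of weight λ and let Ш(A) = ⊕_{k≥0} A^{⊗(k+1)} be the mixable shuffle algebra with Rota-Baxter operator P_A(x_0 ⊗ ... ⊗ x_n) = 1 ⊗ x_0 ⊗ ... ⊗ x_n. Define d_A(x_0 ⊗ x_1 ⊗ ... ⊗ x_n) = d_0(x_0) ⊗ x_1 ⊗ ... ⊗ x_n + x_0x_1 ⊗ x_2 ⊗ ... ⊗ x_n + λ d_0(x_0)x_1 ⊗ x_2 ⊗ ... ⊗ x_n (with d_A(x_0) = d_0(x_0) for n=0). Then d_A ∘ P_A = id on Ш(A). -/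
/-- Pure tensors `x₀ ⊗ x₁ ⊗ ⋯ ⊗ xₙ` in the mixable shuffle (free commutative
Rota-Baxter) algebra, expressed via the embedding `ι : A → Ш(A)` and the
Rota-Baxter operator `P`: `x₀ ⊗ x₁ ⊗ ⋯ ⊗ xₙ = x₀ · P(x₁ ⊗ ⋯ ⊗ xₙ)`. -/
def pureTensor {k A S : Type*} [CommRing k] [CommRing A] [Algebra k A]
    [CommRing S] [Algebra k S] (iota : A →ₐ[k] S) (P : S →ₗ[k] S) :
    A → List A → S
  | a, [] => iota a
  | a, b :: l => iota a * P (pureTensor iota P b l)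

section PureTensor

variable {k A S : Type*} [CommRing k] [CommRing A] [Algebra k A] [CommRing S] [Algebra k S]
  (iota : A →ₐ[k] S) (P : S →ₗ[k] S)

@[simp]
theorem pureTensor_zero (l : List A) : pureTensor iota P 0 l = 0 := by
  cases l <;> simp [pureTensor]

theorem pureTensor_one_cons (a : A) (l : List A) :
    pureTensor iota P 1 (a :: l) = P (pureTensor iota P a l) := by
  simp [pureTensor]

end PureTensor

theorem mixable_shuffle_d_section_of_P_general
    (k A S : Type*) [CommRing k] [CommRing A] [Algebra k A]
    [CommRing S] [Algebra k S]
    (lam : k) (iota : A →ₐ[k] S) (P : S →ₗ[k] S)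
    (d0 : A →ₗ[k] A)
    (hd0one : d0 1 = 0)
    (dA : S →ₗ[k] S)
    (hdA : ∀ (a b : A) (l : List A),
      dA (pureTensor iota P a (b :: l)) =
        pureTensor iota P (d0 a) (b :: l) + pureTensor iota P (a * b) l +
          lam • pureTensor iota P (d0 a * b) l) :
    ∀ (a : A) (l : List A), dA (P (pureTensor iota P a l)) = pureTensor iota P a l := by
  intro a l
  rw [← pureTensor_one_cons, hdA, hd0one, zero_mul, pureTensor_zero, pureTensor_zero, one_mul,
    smul_zero, zero_add, add_zero]

/-- On the mixable shuffle algebra `Ш(A)` over a commutative λ-differential algebra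
`(A, d₀)`, the operator `d_A` defined on pure tensors by
`d_A(x₀⊗x₁⊗⋯⊗xₙ) = d₀(x₀)⊗x₁⊗⋯⊗xₙ + x₀x₁⊗x₂⊗⋯⊗xₙ + λ d₀(x₀)x₁⊗x₂⊗⋯⊗xₙ`
satisfies `d_A ∘ P_A = id`, where `P_A(x₀⊗⋯⊗xₙ) = 1⊗x₀⊗⋯⊗xₙ`. -/
theorem mixable_shuffle_d_section_of_P
    (k A S : Type*) [CommRing k] [CommRing A] [Algebra k A]
    [CommRing S] [Algebra k S]
    (lam : k) (iota : A →ₐ[k] S) (P : S →ₗ[k] S)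
    (hRB : ∀ x y : S, P x * P y = P (x * P y) + P (P x * y) + lam • P (x * y))
    (hspan : Submodule.span k
      (Set.range fun p : A × List A => pureTensor iota P p.1 p.2) = ⊤)
    (d0 : A →ₗ[k] A)
    (hd0leib : ∀ x y : A, d0 (x * y) = d0 x * y + x * d0 y + lam • (d0 x * d0 y))
    (hd0one : d0 1 = 0)
    (dA : S →ₗ[k] S)
    (hdA0 : ∀ a : A, dA (pureTensor iota P a []) = pureTensor iota P (d0 a) [])
    (hdA : ∀ (a b : A) (l : List A),
      dA (pureTensor iota P a (b :: l)) =
        pureTensor iota P (d0 a) (b :: l) + pureTensor iota P (a * b) l +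
          lam • pureTensor iota P (d0 a * b) l) :
    ∀ (a : A) (l : List A), dA (P (pureTensor iota P a l)) = pureTensor iota P a l :=
  mixable_shuffle_d_section_of_P_general k A S lam iota P d0 hd0one dA hdA
end

section
/- Let (A, d_0) be a commutative differential k-algebra of weight λ. The operator d_A on the mixable shuffle algebra Ш(A), defined by d_A(x_0 ⊗ x_1 ⊗ ... ⊗ x_n) = d_0(x_0) ⊗ x_1 ⊗ ... ⊗ x_n + x_0x_1 ⊗ x_2 ⊗ ... ⊗ x_n + λ d_0(x_0)x_1 ⊗ x_2 ⊗ ... ⊗ x_n, is a differential operator of weight λ with respect to the mixable shuffle product ⋄: d_A(x ⋄ y) = d_A(x) ⋄ y + x ⋄ d_A(y) + λ d_A(x) ⋄ d_A(y). -/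
section

variable {k A S : Type*} [CommRing k] [CommRing A] [Algebra k A] [CommRing S] [Algebra k S]
  (iota : A →ₐ[k] S) (P : S →ₗ[k] S)

theorem pureTensor_mul_head (c b : A) (l : List A) :
    pureTensor iota P (c * b) l = iota c * pureTensor iota P b l := by
  cases l <;> simp [pureTensor, mul_assoc]

def IsOneOrP (t δ : S) : Prop := t = 1 ∧ δ = 0 ∨ t = P δ

theorem exists_pureTensor_eq_iota_mul (a : A) (l : List A) :
    ∃ t δ, IsOneOrP P t δ ∧ pureTensor iota P a l = iota a * t := by
  cases l with
  | nil => exact ⟨1, 0, Or.inl ⟨rfl, rfl⟩, (mul_one _).symm⟩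
  | cons b l => exact ⟨_, _, Or.inr rfl, rfl⟩

variable {P}

theorem IsOneOrP.mul {lam : k}
    (hRB : ∀ x y : S, P x * P y = P (x * P y) + P (P x * y) + lam • P (x * y))
    {t δ t' δ' : S} (h : IsOneOrP P t δ) (h' : IsOneOrP P t' δ') :
    IsOneOrP P (t * t') (δ * t' + t * δ' + lam • (δ * δ')) := by
  rcases h with ⟨rfl, rfl⟩ | rfl <;> rcases h' with ⟨rfl, rfl⟩ | rfl
  · exact Or.inl (by simp)
  · exact Or.inr (by simp)
  · exact Or.inr (by simp)
  · exact Or.inr (by rw [hRB, map_add, map_add, map_smul])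

variable {iota} {lam : k} {d0 : A →ₗ[k] A} {dA : S →ₗ[k] S}

theorem apply_iota_mul_P
    (hspan : Submodule.span k
      (Set.range fun p : A × List A => pureTensor iota P p.1 p.2) = ⊤)
    (hdA : ∀ (a b : A) (l : List A),
      dA (pureTensor iota P a (b :: l)) =
        pureTensor iota P (d0 a) (b :: l) + pureTensor iota P (a * b) l +
          lam • pureTensor iota P (d0 a * b) l)
    (c : A) (z : S) :
    dA (iota c * P z) = iota (d0 c) * P z + iota c * z + lam • (iota (d0 c) * z) := by
  have hext : dA ∘ₗ LinearMap.mulLeft k (iota c) ∘ₗ P =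
      LinearMap.mulLeft k (iota (d0 c)) ∘ₗ P + LinearMap.mulLeft k (iota c) +
        lam • LinearMap.mulLeft k (iota (d0 c)) := by
    refine LinearMap.ext_on_range hspan fun ⟨b, l⟩ => ?_
    simpa [pureTensor, pureTensor_mul_head] using hdA c b l
  simpa using LinearMap.congr_fun hext z

theorem apply_iota_mul_of_isOneOrP
    (hspan : Submodule.span k
      (Set.range fun p : A × List A => pureTensor iota P p.1 p.2) = ⊤)
    (hdA0 : ∀ a : A, dA (pureTensor iota P a []) = pureTensor iota P (d0 a) [])
    (hdA : ∀ (a b : A) (l : List A),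
      dA (pureTensor iota P a (b :: l)) =
        pureTensor iota P (d0 a) (b :: l) + pureTensor iota P (a * b) l +
          lam • pureTensor iota P (d0 a * b) l)
    {t δ : S} (h : IsOneOrP P t δ) (c : A) :
    dA (iota c * t) = iota (d0 c) * t + iota c * δ + lam • (iota (d0 c) * δ) := by
  rcases h with ⟨rfl, rfl⟩ | rfl
  · simpa [pureTensor] using hdA0 c
  · exact apply_iota_mul_P hspan hdA c δ

end

theorem mixable_shuffle_d_is_lambda_derivation_general
    (k A S : Type*) [CommRing k] [CommRing A] [Algebra k A]
    [CommRing S] [Algebra k S]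
    (lam : k) (iota : A →ₐ[k] S) (P : S →ₗ[k] S)
    (hRB : ∀ x y : S, P x * P y = P (x * P y) + P (P x * y) + lam • P (x * y))
    (hspan : Submodule.span k
      (Set.range fun p : A × List A => pureTensor iota P p.1 p.2) = ⊤)
    (d0 : A →ₗ[k] A)
    (hd0leib : ∀ x y : A, d0 (x * y) = d0 x * y + x * d0 y + lam • (d0 x * d0 y))
    (dA : S →ₗ[k] S)
    (hdA0 : ∀ a : A, dA (pureTensor iota P a []) = pureTensor iota P (d0 a) [])
    (hdA : ∀ (a b : A) (l : List A),
      dA (pureTensor iota P a (b :: l)) =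
        pureTensor iota P (d0 a) (b :: l) + pureTensor iota P (a * b) l +
          lam • pureTensor iota P (d0 a * b) l) :
    ∀ (a a' : A) (l l' : List A),
      dA (pureTensor iota P a l * pureTensor iota P a' l') =
        dA (pureTensor iota P a l) * pureTensor iota P a' l' +
          pureTensor iota P a l * dA (pureTensor iota P a' l') +
          lam • (dA (pureTensor iota P a l) * dA (pureTensor iota P a' l')) := by
  intro a a' l l'
  obtain ⟨t, δ, ht, hx⟩ := exists_pureTensor_eq_iota_mul iota P a l
  obtain ⟨t', δ', ht', hy⟩ := exists_pureTensor_eq_iota_mul iota P a' l'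
  have hxy : pureTensor iota P a l * pureTensor iota P a' l' = iota (a * a') * (t * t') := by
    rw [hx, hy, map_mul, mul_mul_mul_comm]
  rw [hxy, hx, hy, apply_iota_mul_of_isOneOrP hspan hdA0 hdA (ht.mul hRB ht'),
    apply_iota_mul_of_isOneOrP hspan hdA0 hdA ht, apply_iota_mul_of_isOneOrP hspan hdA0 hdA ht',
    hd0leib]
  simp only [map_add, map_mul, Algebra.smul_def, AlgHom.commutes]
  ring

/-- The operator `d_A` on the mixable shuffle algebra `Ш(A)` is a differential
operator of weight λ with respect to the mixable shuffle product: it satisfies the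
λ-Leibniz rule (stated here on products of pure tensors, which span `Ш(A)`). -/
theorem mixable_shuffle_d_is_lambda_derivation
    (k A S : Type*) [CommRing k] [CommRing A] [Algebra k A]
    [CommRing S] [Algebra k S]
    (lam : k) (iota : A →ₐ[k] S) (P : S →ₗ[k] S)
    (hRB : ∀ x y : S, P x * P y = P (x * P y) + P (P x * y) + lam • P (x * y))
    (hspan : Submodule.span k
      (Set.range fun p : A × List A => pureTensor iota P p.1 p.2) = ⊤)
    (d0 : A →ₗ[k] A)
    (hd0leib : ∀ x y : A, d0 (x * y) = d0 x * y + x * d0 y + lam • (d0 x * d0 y))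
    (hd0one : d0 1 = 0)
    (dA : S →ₗ[k] S)
    (hdA0 : ∀ a : A, dA (pureTensor iota P a []) = pureTensor iota P (d0 a) [])
    (hdA : ∀ (a b : A) (l : List A),
      dA (pureTensor iota P a (b :: l)) =
        pureTensor iota P (d0 a) (b :: l) + pureTensor iota P (a * b) l +
          lam • pureTensor iota P (d0 a * b) l) :
    ∀ (a a' : A) (l l' : List A),
      dA (pureTensor iota P a l * pureTensor iota P a' l') =
        dA (pureTensor iota P a l) * pureTensor iota P a' l' +
          pureTensor iota P a l * dA (pureTensor iota P a' l') +
          lam • (dA (pureTensor iota P a l) * dA (pureTensor iota P a' l')) :=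
  mixable_shuffle_d_is_lambda_derivation_general k A S lam iota P hRB hspan d0 hd0leib dA hdA0 hdA
end

section
/- Let X be a set and let k{X} = k[Δ(X)] be the polynomial algebra on the set Δ(X) = {x^{(n)} : x ∈ X, n ∈ ℕ}, equipped with the derivation d_X of weight λ determined by d_X(x^{(n)}) = x^{(n+1)} and the recursive λ-Leibniz rule on monomials. Then (k{X}, d_X) is the free commutative differential algebra of weight λ on X: for any commutative differential algebra (R,d) of weight λ and any map f: X → R, there is a unique λ-differential algebra homomorphism f̄: k{X} → R with f̄(x^{(0)}) = f(x) for all x ∈ X. -/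
/-!
The extension is forced: a differential homomorphism must send `x^{(n)} = d_X^n x^{(0)}` to
`d^n (f x)`, so it is the evaluation `aeval (x^{(n)} ↦ d^n (f x))`. Conversely this evaluation
commutes with the derivations: both sides are compatible with sums, scalars and, by the two
λ-Leibniz rules, with products, so it suffices to check it on the variables, where it is the
identity `d (d^n (f x)) = d^{n+1} (f x)`.
-/

namespace MvPolynomial

theorem apply_X_eq_iterate {k ι R : Type*} [CommSemiring k]
    (D : MvPolynomial (ι × ℕ) k → MvPolynomial (ι × ℕ) k)
    (hDX : ∀ x n, D (X (x, n)) = X (x, n + 1)) (d : R → R)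
    (G : MvPolynomial (ι × ℕ) k → R)
    (hG : ∀ p, G (D p) = d (G p)) (x : ι) (n : ℕ) :
    G (X (x, n)) = d^[n] (G (X (x, 0))) := by
  induction n with
  | zero => rfl
  | succ n ih => rw [← hDX, hG, ih, Function.iterate_succ_apply']

variable {k R σ : Type*} [CommRing k] [CommRing R] [Algebra k R]

theorem algHom_map_comp_eq_of_forall_X (lam : k)
    (D : MvPolynomial σ k →ₗ[k] MvPolynomial σ k)
    (hDleib : ∀ p q, D (p * q) = D p * q + p * D q + lam • (D p * D q)) (hDone : D 1 = 0)
    (d : R →ₗ[k] R) (hdleib : ∀ x y, d (x * y) = d x * y + x * d y + lam • (d x * d y))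
    (hdone : d 1 = 0) (F : MvPolynomial σ k →ₐ[k] R) (hX : ∀ i, F (D (X i)) = d (F (X i)))
    (p : MvPolynomial σ k) : F (D p) = d (F p) := by
  induction p using MvPolynomial.induction_on with
  | C a =>
    rw [← mul_one (C a), ← smul_eq_C_mul, map_smul D, hDone, smul_zero, map_zero, map_smul,
      map_one, map_smul, hdone, smul_zero]
  | add p q hp hq => rw [map_add, map_add, map_add, map_add, hp, hq]
  | mul_X p i hp =>
    rw [hDleib, map_mul F p, hdleib, map_add, map_add, map_smul, map_mul, map_mul, map_mul, hp,
      hX]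

end MvPolynomial

open MvPolynomial in
/-- The polynomial algebra `k{X} = k[Δ(X)]` on `Δ(X) = X × ℕ`, equipped with the
weight-λ derivation `d_X` determined by `d_X(x^{(n)}) = x^{(n+1)}` and the λ-Leibniz
rule, is the free commutative differential algebra of weight λ on `X`: any map
`f : X → R` into a commutative λ-differential algebra `(R, d)` extends uniquely to a
λ-differential algebra homomorphism. -/
theorem free_commutative_differential_algebra
    (k X R : Type*) [CommRing k] [CommRing R] [Algebra k R]
    (lam : k)
    (dX : MvPolynomial (X × ℕ) k →ₗ[k] MvPolynomial (X × ℕ) k)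
    (hdXgen : ∀ (x : X) (n : ℕ),
      dX (MvPolynomial.X (x, n)) = MvPolynomial.X (x, n + 1))
    (hdXleib : ∀ p q : MvPolynomial (X × ℕ) k,
      dX (p * q) = dX p * q + p * dX q + lam • (dX p * dX q))
    (hdXone : dX 1 = 0)
    (d : R →ₗ[k] R)
    (hdleib : ∀ x y : R, d (x * y) = d x * y + x * d y + lam • (d x * d y))
    (hdone : d 1 = 0)
    (f : X → R) :
    ∃! F : MvPolynomial (X × ℕ) k →ₐ[k] R,
      (∀ p : MvPolynomial (X × ℕ) k, F (dX p) = d (F p)) ∧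
      (∀ x : X, F (MvPolynomial.X (x, 0)) = f x) := by
  set F : MvPolynomial (X × ℕ) k →ₐ[k] R := aeval fun i => d^[i.2] (f i.1)
  have hF_comm : ∀ p, F (dX p) = d (F p) :=
    algHom_map_comp_eq_of_forall_X lam dX hdXleib hdXone d hdleib hdone F fun ⟨x, n⟩ => by
      simp only [F, hdXgen, aeval_X, Function.iterate_succ_apply']
  refine ⟨F, ⟨hF_comm, fun x => aeval_X _ _⟩, ?_⟩
  rintro G ⟨hG_comm, hG_X⟩
  refine algHom_ext fun ⟨x, n⟩ => ?_
  rw [apply_X_eq_iterate dX hdXgen d G hG_comm, hG_X,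
    apply_X_eq_iterate dX hdXgen d F hF_comm, aeval_X]
  rfl
end
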